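/- Let m ≥ 3, let E_m denote the edge set of the complete graph K_m, let n and k be integers with 1 ≤ k < n, and let Q = (q_{ej}) be a real matrix indexed by E_m × [n]. Then there exist vectors α : E_m → ℝ and β ∈ ℝ^n such that Σ_{e∈T} Σ_{j∈S} q_{ej} = Σ_{e∈T} α_e + Σ_{j∈S} β_j for every spanning tree T of K_m and every k-element subset S of [n], if and only if there exist vectors a : E_m → ℝ and b ∈ ℝ^n with q_{ej} = a_e + b_j for all e ∈ E_m and j ∈ [n]. -/
import Mathlib

open Finset

/-- `T` is the edge set of a spanning tree of the complete graph on `Fin m`. -/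
def IsSpanningTreeEdgeSet (m : ℕ) (T : Finset (Sym2 (Fin m))) : Prop :=
  (∀ e ∈ T, ¬ e.IsDiag) ∧ T.card = m - 1 ∧
    (SimpleGraph.fromEdgeSet (T : Set (Sym2 (Fin m)))).Connected

/-- The common part of two "modified star" spanning trees used for edge exchange. -/
def stBase {m : ℕ} (u v w : Fin m) : Finset (Sym2 (Fin m)) :=
  insert s(v, w)
    ((Finset.univ.filter (fun x => x ≠ u ∧ x ≠ v ∧ x ≠ w)).image (fun x => s(u, x)))

lemma stBase_comm {m : ℕ} (u v w : Fin m) : stBase u v w = stBase u w v := by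
  unfold stBase
  rw [Sym2.eq_swap]
  congr 1
  congr 1
  ext x
  simp only [mem_filter, mem_univ, true_and]
  tauto

lemma mem_stBase {m : ℕ} {u v w : Fin m} {e : Sym2 (Fin m)} :
    e ∈ stBase u v w ↔ e = s(v, w) ∨ ∃ x, (x ≠ u ∧ x ≠ v ∧ x ≠ w) ∧ e = s(u, x) := by
  simp [stBase, eq_comm]

lemma sInsert_notMem_stBase {m : ℕ} {u v w : Fin m}
    (huv : u ≠ v) (huw : u ≠ w) : s(u, v) ∉ stBase u v w := by
  rw [mem_stBase]
  rintro (h | ⟨x, ⟨hxu, hxv, hxw⟩, h⟩) <;> rw [Sym2.eq_iff] at h <;> tauto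

lemma stTree {m : ℕ} (hm : 3 ≤ m) {u v w : Fin m}
    (huv : u ≠ v) (huw : u ≠ w) (hvw : v ≠ w) :
    IsSpanningTreeEdgeSet m (insert s(u, v) (stBase u v w)) := by
  have hmemT : ∀ e : Sym2 (Fin m), e ∈ insert s(u, v) (stBase u v w) ↔
      e = s(u, v) ∨ e = s(v, w) ∨ ∃ x, (x ≠ u ∧ x ≠ v ∧ x ≠ w) ∧ e = s(u, x) := by
    intro e; rw [mem_insert, mem_stBase]
  refine ⟨?_, ?_, ?_⟩
  · intro e he
    rw [hmemT] at he
    rcases he with h | h | ⟨x, ⟨hxu, _, _⟩, h⟩ <;> subst h <;>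
      simp [Sym2.mk_isDiag_iff] <;> tauto
  · -- cardinality
    have hfilt : (Finset.univ.filter (fun x => x ≠ u ∧ x ≠ v ∧ x ≠ w) :
        Finset (Fin m)) = Finset.univ \ {u, v, w} := by
      ext x; simp [not_or]
    have hc3 : ({u, v, w} : Finset (Fin m)).card = 3 := by
      rw [card_insert_of_notMem (by simp [huv, huw]),
        card_insert_of_notMem (by simp [hvw]), card_singleton]
    have hcf : (Finset.univ.filter (fun x => x ≠ u ∧ x ≠ v ∧ x ≠ w) :
        Finset (Fin m)).card = m - 3 := by
      rw [hfilt, card_sdiff_of_subset (subset_univ _), hc3, card_univ, Fintype.card_fin]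
    have hinj : Set.InjOn (fun x => s(u, x))
        ((Finset.univ.filter (fun x => x ≠ u ∧ x ≠ v ∧ x ≠ w) : Finset (Fin m)) : Set (Fin m)) := by
      intro x hx y hy hxy
      simp only [coe_filter, Set.mem_setOf_eq] at hx hy
      simp only [Sym2.eq_iff] at hxy
      tauto
    have hci : ((Finset.univ.filter (fun x => x ≠ u ∧ x ≠ v ∧ x ≠ w)).image
        (fun x => s(u, x))).card = m - 3 := by
      rw [card_image_of_injOn hinj, hcf]
    have hvwnot : s(v, w) ∉ (Finset.univ.filter (fun x => x ≠ u ∧ x ≠ v ∧ x ≠ w)).image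
        (fun x => s(u, x)) := by
      simp only [mem_image, mem_filter, mem_univ, true_and]
      rintro ⟨x, ⟨hxu, hxv, hxw⟩, h⟩
      rw [Sym2.eq_iff] at h; tauto
    have hcb : (stBase u v w).card = m - 3 + 1 := by
      rw [stBase, card_insert_of_notMem hvwnot, hci]
    rw [card_insert_of_notMem (sInsert_notMem_stBase huv huw), hcb]
    omega
  · -- connectivity
    set T := insert s(u, v) (stBase u v w) with hT
    set G := SimpleGraph.fromEdgeSet ((T : Finset (Sym2 (Fin m))) : Set (Sym2 (Fin m))) with hG
    have hadj : ∀ a b : Fin m, s(a, b) ∈ T → a ≠ b → G.Adj a b := by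
      intro a b h hab
      rw [hG, SimpleGraph.fromEdgeSet_adj]
      exact ⟨Finset.mem_coe.mpr h, hab⟩
    have key : ∀ x : Fin m, G.Reachable x u := by
      intro x
      by_cases hxu : x = u
      · subst hxu; exact SimpleGraph.Reachable.refl x
      by_cases hxv : x = v
      · subst hxv
        exact (hadj u x (by rw [hmemT]; tauto) (Ne.symm hxu)).symm.reachable
      by_cases hxw : x = w
      · subst hxw
        have h1 : G.Adj x v := by
          refine hadj x v ?_ (fun h => hvw h.symm)
          rw [Sym2.eq_swap, hmemT]; tauto
        have h2 : G.Adj v u := by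
          refine hadj v u ?_ (Ne.symm huv)
          rw [Sym2.eq_swap, hmemT]; tauto
        exact h1.reachable.trans h2.reachable
      · refine (hadj u x ?_ (Ne.symm hxu)).symm.reachable
        rw [hmemT]
        exact Or.inr (Or.inr ⟨x, ⟨hxu, hxv, hxw⟩, rfl⟩)
    rw [SimpleGraph.connected_iff]
    exact ⟨fun a b => (key a).trans (key b).symm, ⟨u⟩⟩

/-- Linearizability characterization for `COPIC(B(M(K_m)), B(U_{n,k}), Q, c, d)`:
`Q` is linearizable with respect to spanning trees of `K_m` and `k`-subsets of `[n]`
if and only if `q_{ej} = a_e + b_j`. -/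
theorem copic_trees_uniform_linearizable_iff
    (m n k : ℕ) (hm : 3 ≤ m) (hk : 1 ≤ k) (hkn : k < n)
    (Q : Sym2 (Fin m) → Fin n → ℝ) :
    (∃ (α : Sym2 (Fin m) → ℝ) (β : Fin n → ℝ),
      ∀ T : Finset (Sym2 (Fin m)), IsSpanningTreeEdgeSet m T →
      ∀ S : Finset (Fin n), S.card = k →
        ∑ e ∈ T, ∑ j ∈ S, Q e j = ∑ e ∈ T, α e + ∑ j ∈ S, β j) ↔
    (∃ (a : Sym2 (Fin m) → ℝ) (b : Fin n → ℝ),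
      ∀ (e : Sym2 (Fin m)) (j : Fin n), ¬ e.IsDiag → Q e j = a e + b j) := by
  constructor
  · rintro ⟨α, β, h⟩
    -- Step 1: for every spanning tree `T` and `j j'`,
    -- `∑ e ∈ T, (Q e j - Q e j') = β j - β j'`.
    have lemA : ∀ T : Finset (Sym2 (Fin m)), IsSpanningTreeEdgeSet m T →
        ∀ j j' : Fin n, ∑ e ∈ T, (Q e j - Q e j') = β j - β j' := by
      intro T hT j j'
      by_cases hjj : j = j'
      · subst hjj; simp
      -- choose a k-subset S with j ∈ S, j' ∉ S
      have hsub : ({j} : Finset (Fin n)) ⊆ Finset.univ.erase j' := by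
        simp [Finset.mem_erase, hjj]
      have hcard : (Finset.univ.erase j' : Finset (Fin n)).card = n - 1 := by
        rw [Finset.card_erase_of_mem (mem_univ _), card_univ, Fintype.card_fin]
      obtain ⟨S, hjS, hSsub, hScard⟩ :=
        Finset.exists_subsuperset_card_eq hsub
          (show ({j} : Finset (Fin n)).card ≤ k by simp [hk])
          (by rw [hcard]; omega)
      have hjmem : j ∈ S := hjS (Finset.mem_singleton_self j)
      have hj'nmem : j' ∉ S := fun h => by simpa using Finset.mem_erase.mp (hSsub h)
      have hj'ne : j' ∉ S.erase j := fun h => hj'nmem (Finset.mem_of_mem_erase h)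
      set S' := insert j' (S.erase j) with hS'
      have hS'card : S'.card = k := by
        rw [hS', Finset.card_insert_of_notMem hj'ne, Finset.card_erase_of_mem hjmem, hScard]
        omega
      have h1 := h T hT S hScard
      have h2 := h T hT S' hS'card
      have e1 : ∀ f : Fin n → ℝ, ∑ x ∈ S, f x - ∑ x ∈ S', f x = f j - f j' := by
        intro f
        rw [hS', Finset.sum_insert hj'ne, ← Finset.add_sum_erase S f hjmem]
        ring
      have key : ∑ e ∈ T, (Q e j - Q e j') =
          (∑ e ∈ T, ∑ x ∈ S, Q e x) - (∑ e ∈ T, ∑ x ∈ S', Q e x) := by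
        rw [← Finset.sum_sub_distrib]
        exact Finset.sum_congr rfl fun e _ => (e1 (Q e)).symm
      rw [key, h1, h2]
      have := e1 β
      linarith
    -- Step 2: edge exchange at a common vertex
    have lemB : ∀ u v w : Fin m, u ≠ v → u ≠ w → v ≠ w → ∀ j j' : Fin n,
        Q s(u, v) j - Q s(u, v) j' = Q s(u, w) j - Q s(u, w) j' := by
      intro u v w huv huw hvw j j'
      have hT1 := stTree hm huv huw hvw
      have hT2 := stTree hm huw huv (Ne.symm hvw)
      have hA1 := lemA _ hT1 j j'
      have hA2 := lemA _ hT2 j j'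
      rw [Finset.sum_insert (sInsert_notMem_stBase huv huw)] at hA1
      rw [Finset.sum_insert (sInsert_notMem_stBase huw huv), ← stBase_comm] at hA2
      linarith
    have lemB' : ∀ u v w : Fin m, u ≠ v → u ≠ w → ∀ j j' : Fin n,
        Q s(u, v) j - Q s(u, v) j' = Q s(u, w) j - Q s(u, w) j' := by
      intro u v w huv huw j j'
      by_cases hvw : v = w
      · subst hvw; rfl
      · exact lemB u v w huv huw hvw j j'
    -- Step 3: cross differences vanish for all non-diagonal edges
    have cross : ∀ p q x y : Fin m, p ≠ q → x ≠ y → ∀ j j' : Fin n,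
        Q s(p, q) j - Q s(p, q) j' = Q s(x, y) j - Q s(x, y) j' := by
      intro p q x y hpq hxy j j'
      by_cases hpx : p = x
      · subst hpx; exact lemB' p q y hpq hxy j j'
      · calc Q s(p, q) j - Q s(p, q) j' = Q s(p, x) j - Q s(p, x) j' :=
              lemB' p q x hpq hpx j j'
          _ = Q s(x, p) j - Q s(x, p) j' := by rw [Sym2.eq_swap]
          _ = Q s(x, y) j - Q s(x, y) j' := lemB' x p y (Ne.symm hpx) hxy j j'
    -- Step 4: build the decomposition
    have h01 : (⟨0, by omega⟩ : Fin m) ≠ ⟨1, by omega⟩ := by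
      simp [Fin.ext_iff]
    set e₀ : Sym2 (Fin m) := s(⟨0, by omega⟩, ⟨1, by omega⟩) with he₀
    set j₀ : Fin n := ⟨0, by omega⟩ with hj₀
    refine ⟨fun e => Q e j₀, fun j => Q e₀ j - Q e₀ j₀, ?_⟩
    intro e j he
    induction e using Sym2.ind with
    | _ p q =>
      have hpq : p ≠ q := fun h => he (Sym2.mk_isDiag_iff.mpr h)
      have := cross p q _ _ hpq h01 j j₀
      rw [← he₀] at this
      show Q s(p, q) j = Q s(p, q) j₀ + (Q e₀ j - Q e₀ j₀)
      linarith
  · -- easy direction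
    rintro ⟨a, b, hq⟩
    refine ⟨fun e => k * a e, fun j => (m - 1 : ℕ) * b j, ?_⟩
    intro T hT S hS
    obtain ⟨hdiag, hcard, -⟩ := hT
    calc ∑ e ∈ T, ∑ j ∈ S, Q e j = ∑ e ∈ T, ∑ j ∈ S, (a e + b j) := by
          refine Finset.sum_congr rfl fun e he => Finset.sum_congr rfl fun j _ => ?_
          exact hq e j (hdiag e he)
      _ = ∑ e ∈ T, (k * a e + ∑ j ∈ S, b j) := by
          refine Finset.sum_congr rfl fun e _ => ?_
          rw [Finset.sum_add_distrib, Finset.sum_const, hS, nsmul_eq_mul]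
      _ = ∑ e ∈ T, (k : ℝ) * a e + ∑ e ∈ T, ∑ j ∈ S, b j := Finset.sum_add_distrib
      _ = ∑ e ∈ T, (k : ℝ) * a e + ∑ j ∈ S, ((m - 1 : ℕ) : ℝ) * b j := by
          rw [Finset.sum_const, hcard, nsmul_eq_mul, Finset.mul_sum]
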